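/- Let m ≥ 1, let r₁ ≤ r₂ ≤ ⋯ ≤ r_m be positive integers, let λ₁, …, λ_m > 0, let ϱ₀ ≥ 0, and let c_{j,i} ≥ 0 be given constants for all 1 ≤ i < j ≤ m. Then there exist constants g₁, …, g_m > 0 (independent of κ) and θ* > 1 such that for every κ ≥ θ*, the quantities defined recursively by ℓ_m = g_m·κ and ℓ_i = g_i·(ℓ_{i+1})^{r_{i+1} − r_i + 1} for i = m−1, …, 1 satisfy: (λ_m/2)ℓ_m² − ϱ₀ ≥ κ·ℓ_m, and for every 1 ≤ i ≤ m−1, (λ_i/4)ℓ_i² − Σ_{j=i+1}^{m} c_{j,i}·ℓ_j^{2(r_j − r_i + 1)} − ϱ₀ ≥ κ·ℓ_i. -/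

import Mathlib

/-!
Take `κ ≥ 2`. Going down the recursion, every `ℓ i` is at least `ℓ m ≥ κ ≥ 1`; and since the
exponents compose, `ℓ j ^ (r j - r i + 1) ≤ ℓ (i+1) ^ (r (i+1) - r i + 1) =: T` for `i < j`, while
`ℓ i = g i * T` with `T ≥ κ`. Every term of the sum is thus at most `c j i * T ^ 2`, and the
inequality at `i` reduces to `ϱ₀ + ∑ j, c j i + g i ≤ λ i / 4 * g i ^ 2`, which fixes `g i`
independently of `κ`.
-/

open Finset

theorem sub_add_one_le_mul_sub_add_one {a b c : ℕ} (hab : a ≤ b) (hbc : b ≤ c) :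
    c - a + 1 ≤ (c - b + 1) * (b - a + 1) := by
  rw [show c - a = (c - b) + (b - a) by omega, add_one_mul, mul_add_one]
  omega

theorem pow_sub_add_one_le_pow_sub_add_one {R : Type*} [Semiring R] [PartialOrder R]
    [IsOrderedRing R] {x y : R} {a b c : ℕ} (hx : 1 ≤ x) (hab : a ≤ b) (hbc : b ≤ c)
    (h : x ^ (c - b + 1) ≤ y) : x ^ (c - a + 1) ≤ y ^ (b - a + 1) :=
  calc x ^ (c - a + 1) ≤ x ^ ((c - b + 1) * (b - a + 1)) :=
        pow_le_pow_right₀ hx (sub_add_one_le_mul_sub_add_one hab hbc)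
    _ = (x ^ (c - b + 1)) ^ (b - a + 1) := pow_mul _ _ _
    _ ≤ y ^ (b - a + 1) := pow_le_pow_left₀ (pow_nonneg (zero_le_one.trans hx) _) h _

noncomputable def gain (μ A : ℝ) : ℝ := max 1 ((A + 1) / μ)

theorem one_le_gain (μ A : ℝ) : 1 ≤ gain μ A := le_max_left _ _

theorem add_gain_le_mul_gain_sq {μ A : ℝ} (hμ : 0 < μ) (hA : 0 ≤ A) :
    A + gain μ A ≤ μ * gain μ A ^ 2 := by
  have hg := one_le_gain μ A
  have hAg : A + 1 ≤ μ * gain μ A := (div_le_iff₀' hμ).1 (le_max_right _ _)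
  nlinarith [mul_le_mul_of_nonneg_right hAg (zero_le_one.trans hg)]

theorem mul_le_sub_sub_of_add_le_mul_sq {μ g T κ ϱ s S : ℝ} (hg : 0 ≤ g) (hT : 1 ≤ T)
    (hκT : κ ≤ T) (hϱ : 0 ≤ ϱ) (hgain : ϱ + s + g ≤ μ * g ^ 2) (hS : S ≤ s * T ^ 2) :
    κ * (g * T) ≤ μ * (g * T) ^ 2 - S - ϱ := by
  have hT2 : 1 ≤ T ^ 2 := one_le_pow₀ hT
  have hκ : κ * (g * T) ≤ g * T ^ 2 := by
    nlinarith [mul_le_mul_of_nonneg_left hκT (mul_nonneg hg (zero_le_one.trans hT))]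
  nlinarith [mul_le_mul_of_nonneg_right hgain (zero_le_one.trans hT2),
    le_mul_of_one_le_right hϱ hT2]

section GainRecursion

variable {m : ℕ} {r : ℕ → ℕ} {g ℓ : ℕ → ℝ}

theorem le_of_gain_recursion (hg : ∀ i, 1 ≤ g i)
    (hrec : ∀ i, 1 ≤ i → i < m → ℓ i = g i * ℓ (i + 1) ^ (r (i + 1) - r i + 1))
    (hℓm : 1 ≤ ℓ m) {k : ℕ} (hk : 1 ≤ k) (hkm : k ≤ m) : ℓ m ≤ ℓ k := by
  refine Nat.decreasingInduction' (P := fun k => ℓ m ≤ ℓ k)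
    (fun k' hk'm hkk' ih => ?_) hkm le_rfl
  rw [hrec k' (hk.trans hkk') hk'm]
  have h1 : 1 ≤ ℓ (k' + 1) := hℓm.trans ih
  calc ℓ m ≤ ℓ (k' + 1) := ih
    _ ≤ ℓ (k' + 1) ^ (r (k' + 1) - r k' + 1) := le_self_pow₀ h1 (Nat.succ_ne_zero _)
    _ ≤ _ := le_mul_of_one_le_left (pow_nonneg (zero_le_one.trans h1) _) (hg k')

theorem pow_le_of_gain_recursion (hr : MonotoneOn r (Set.Icc 1 m)) (hg : ∀ i, 1 ≤ g i)
    (hrec : ∀ i, 1 ≤ i → i < m → ℓ i = g i * ℓ (i + 1) ^ (r (i + 1) - r i + 1))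
    (hℓ : ∀ k, 1 ≤ k → k ≤ m → 1 ≤ ℓ k) {k j : ℕ} (hk : 1 ≤ k) (hkj : k ≤ j) (hj : j ≤ m) :
    ℓ j ^ (r j - r k + 1) ≤ ℓ k := by
  refine Nat.decreasingInduction' (P := fun k => ℓ j ^ (r j - r k + 1) ≤ ℓ k)
    (fun k' hk'j hkk' ih => ?_) hkj (by simp)
  have hk' : 1 ≤ k' := hk.trans hkk'
  rw [hrec k' hk' (hk'j.trans_le hj)]
  have mem : ∀ n, 1 ≤ n → n ≤ j → n ∈ Set.Icc 1 m := fun n h1 h2 => ⟨h1, h2.trans hj⟩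
  calc ℓ j ^ (r j - r k' + 1) ≤ ℓ (k' + 1) ^ (r (k' + 1) - r k' + 1) :=
        pow_sub_add_one_le_pow_sub_add_one (hℓ j (hk'.trans hk'j.le) hj)
          (hr (mem _ hk' hk'j.le) (mem _ (by omega) hk'j) (Nat.le_succ k'))
          (hr (mem _ (by omega) hk'j) (mem _ (by omega) le_rfl) hk'j) ih
    _ ≤ _ := le_mul_of_one_le_left
        (pow_nonneg (zero_le_one.trans (hℓ _ (by omega) (hk'j.trans_le hj))) _) (hg k')

theorem sum_le_of_gain_recursion (hr : MonotoneOn r (Set.Icc 1 m)) (hg : ∀ i, 1 ≤ g i)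
    (hrec : ∀ i, 1 ≤ i → i < m → ℓ i = g i * ℓ (i + 1) ^ (r (i + 1) - r i + 1))
    (hℓ : ∀ k, 1 ≤ k → k ≤ m → 1 ≤ ℓ k) {i : ℕ} (hi : 1 ≤ i) {c : ℕ → ℝ}
    (hc : ∀ j ∈ Icc (i + 1) m, 0 ≤ c j) :
    ∑ j ∈ Icc (i + 1) m, c j * ℓ j ^ (2 * (r j - r i + 1))
      ≤ (∑ j ∈ Icc (i + 1) m, c j) * (ℓ (i + 1) ^ (r (i + 1) - r i + 1)) ^ 2 := by
  rw [sum_mul]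
  refine sum_le_sum fun j hj => mul_le_mul_of_nonneg_left ?_ (hc j hj)
  obtain ⟨hij, hjm⟩ := mem_Icc.1 hj
  rw [mul_comm, pow_mul]
  exact pow_le_pow_left₀ (pow_nonneg (zero_le_one.trans (hℓ j (by omega) hjm)) _)
    (pow_sub_add_one_le_pow_sub_add_one (hℓ j (by omega) hjm)
      (hr ⟨hi, by omega⟩ ⟨by omega, by omega⟩ (Nat.le_succ i))
      (hr ⟨by omega, by omega⟩ ⟨by omega, hjm⟩ hij)
      (pow_le_of_gain_recursion hr hg hrec hℓ (by omega) hij hjm)) 2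

end GainRecursion

open Finset in
theorem stmt_7_general (m : ℕ) (hm : 1 ≤ m)
    (r : ℕ → ℕ)
    (hr_mono : ∀ i, 1 ≤ i → i < m → r i ≤ r (i + 1))
    (lam : ℕ → ℝ) (hlam : ∀ i, 1 ≤ i → i ≤ m → 0 < lam i)
    (ϱ₀ : ℝ) (hϱ₀ : 0 ≤ ϱ₀)
    (c : ℕ → ℕ → ℝ) (hc : ∀ i j, 1 ≤ i → i < j → j ≤ m → 0 ≤ c j i) :
    ∃ g : ℕ → ℝ, (∀ i, 1 ≤ i → i ≤ m → 0 < g i) ∧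
      ∃ θ : ℝ, 1 < θ ∧
        ∀ κ : ℝ, θ ≤ κ →
          ∀ ℓ : ℕ → ℝ, ℓ m = g m * κ →
            (∀ i, 1 ≤ i → i < m → ℓ i = g i * (ℓ (i + 1)) ^ (r (i + 1) - r i + 1)) →
            (lam m / 2 * (ℓ m) ^ 2 - ϱ₀ ≥ κ * ℓ m ∧
             ∀ i, 1 ≤ i → i < m →
               lam i / 4 * (ℓ i) ^ 2
                 - (∑ j ∈ Icc (i + 1) m, c j i * (ℓ j) ^ (2 * (r j - r i + 1)))
                 - ϱ₀ ≥ κ * ℓ i) := by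
  have hr : MonotoneOn r (Set.Icc 1 m) := monotoneOn_of_le_add_one Set.ordConnected_Icc
    fun i _ hi hi1 => hr_mono i hi.1 (Nat.lt_of_succ_le hi1.2)
  have hc' : ∀ i, 1 ≤ i → ∀ j ∈ Icc (i + 1) m, 0 ≤ c j i := fun i hi j hj =>
    hc i j hi (mem_Icc.1 hj).1 (mem_Icc.1 hj).2
  set g : ℕ → ℝ := fun i => gain (lam i / 4) (ϱ₀ + ∑ j ∈ Icc (i + 1) m, c j i)
  have hg : ∀ i, 1 ≤ g i := fun i => one_le_gain _ _
  have hgain : ∀ i, 1 ≤ i → i ≤ m →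
      ϱ₀ + (∑ j ∈ Icc (i + 1) m, c j i) + g i ≤ lam i / 4 * g i ^ 2 := fun i hi him =>
    add_gain_le_mul_gain_sq (by linarith [hlam i hi him]) (add_nonneg hϱ₀ (sum_nonneg (hc' i hi)))
  refine ⟨g, fun i _ _ => zero_lt_one.trans_le (hg i), 2, one_lt_two, ?_⟩
  intro κ hκ ℓ hℓm hrec
  have hκℓ : ∀ k, 1 ≤ k → k ≤ m → κ ≤ ℓ k := fun k hk hkm =>
    (hℓm ▸ le_mul_of_one_le_left (by linarith) (hg m)).trans
      (le_of_gain_recursion hg hrec (by nlinarith [hg m]) hk hkm)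
  have hℓ : ∀ k, 1 ≤ k → k ≤ m → 1 ≤ ℓ k := fun k hk hkm => by linarith [hκℓ k hk hkm]
  constructor
  · have hgain_m := hgain m hm le_rfl
    rw [Icc_eq_empty (by omega), sum_empty] at hgain_m
    have key := mul_le_sub_sub_of_add_le_mul_sq (T := κ) (S := 0) (zero_le_one.trans (hg m))
      (by linarith) le_rfl hϱ₀ hgain_m (by simp)
    rw [hℓm]
    nlinarith [hlam m hm le_rfl, sq_nonneg (g m * κ)]
  · intro i hi him
    rw [hrec i hi him]
    exact mul_le_sub_sub_of_add_le_mul_sq (zero_le_one.trans (hg i))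
      (one_le_pow₀ (hℓ _ (by omega) him))
      ((hκℓ _ (by omega) him).trans (le_self_pow₀ (hℓ _ (by omega) him) (Nat.succ_ne_zero _)))
      hϱ₀ (hgain i hi him.le) (sum_le_of_gain_recursion hr hg hrec hℓ hi (hc' i hi))

open Finset in
/-- Lemma 4: recursive design of the high-gain parameters.  With nondecreasing
positive integers `r 1 ≤ ⋯ ≤ r m`, positive `λ i`, `ϱ₀ ≥ 0` and nonnegative
constants `c j i`, there exist gains `g i > 0` (independent of `κ`) and
`θ* > 1` such that for all `κ ≥ θ*`, the recursively defined
`ℓ m = g m κ`, `ℓ i = g i (ℓ (i+1))^(r (i+1) − r i + 1)` satisfy the stated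
inequalities. -/
theorem stmt_7 (m : ℕ) (hm : 1 ≤ m)
    (r : ℕ → ℕ) (hr_pos : ∀ i, 1 ≤ i → i ≤ m → 1 ≤ r i)
    (hr_mono : ∀ i, 1 ≤ i → i < m → r i ≤ r (i + 1))
    (lam : ℕ → ℝ) (hlam : ∀ i, 1 ≤ i → i ≤ m → 0 < lam i)
    (ϱ₀ : ℝ) (hϱ₀ : 0 ≤ ϱ₀)
    (c : ℕ → ℕ → ℝ) (hc : ∀ i j, 1 ≤ i → i < j → j ≤ m → 0 ≤ c j i) :
    ∃ g : ℕ → ℝ, (∀ i, 1 ≤ i → i ≤ m → 0 < g i) ∧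
      ∃ θ : ℝ, 1 < θ ∧
        ∀ κ : ℝ, θ ≤ κ →
          ∀ ℓ : ℕ → ℝ, ℓ m = g m * κ →
            (∀ i, 1 ≤ i → i < m → ℓ i = g i * (ℓ (i + 1)) ^ (r (i + 1) - r i + 1)) →
            (lam m / 2 * (ℓ m) ^ 2 - ϱ₀ ≥ κ * ℓ m ∧
             ∀ i, 1 ≤ i → i < m →
               lam i / 4 * (ℓ i) ^ 2
                 - (∑ j ∈ Icc (i + 1) m, c j i * (ℓ j) ^ (2 * (r j - r i + 1)))
                 - ϱ₀ ≥ κ * ℓ i) :=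
  stmt_7_general m hm r hr_mono lam hlam ϱ₀ hϱ₀ c hc
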